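/- arXiv:1408.6774 — 4 statements merged into one kernel-verified Lean document; each statement's English description precedes it below -/
import Mathlib

section
/- Let A ∈ ℝ^{n×n} and b ∈ ℝ^n. The max-plus Bellman equation x = (A ⊗ x) ⊕ b has a solution x ∈ ℝ^n if and only if ρ(A) ≤ 0. -/
open Finset

/-- Max-plus matrix-vector product: `(A ⊗ x)_i = max_j (a_{ij} + x_j)`. -/
noncomputable def mpMulVec {ι κ : Type*} [Fintype κ] (A : ι → κ → ℝ) (x : κ → ℝ) (i : ι) : ℝ :=
  ⨆ j, (A i j + x j)

/-- Max-plus matrix-matrix product: `(A ⊗ B)_{ik} = max_j (a_{ij} + b_{jk})`. -/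
noncomputable def mpMul {ι κ τ : Type*} [Fintype κ] (A : ι → κ → ℝ) (B : κ → τ → ℝ)
    (i : ι) (k : τ) : ℝ :=
  ⨆ j, (A i j + B j k)

/-- `mpPow1 A s` is the `(s+1)`-st max-plus power of `A`, i.e. `A^{⊗(s+1)}`. -/
noncomputable def mpPow1 {ι : Type*} [Fintype ι] (A : ι → ι → ℝ) : ℕ → ι → ι → ℝ
  | 0 => A
  | (k + 1) => mpMul A (mpPow1 A k)

/-- Weight of the walk `P 0 → P 1 → ⋯ → P len` in the complete weighted digraph `D(B)`. -/
noncomputable def walkWeight {ι : Type*} (B : ι → ι → ℝ) (len : ℕ) (P : Fin (len + 1) → ι) : ℝ :=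
  ∑ t : Fin len, B (P t.castSucc) (P t.succ)

/-- The maximum cycle mean `ρ(A)`: the maximum over all cycles (closed walks of length
`1 ≤ k ≤ n`) of the average weight of the cycle. -/
noncomputable def maxCycleMean {ι : Type*} [Fintype ι] (A : ι → ι → ℝ) : ℝ :=
  sSup { r | ∃ k, 1 ≤ k ∧ k ≤ Fintype.card ι ∧
    ∃ P : Fin (k + 1) → ι, P 0 = P (Fin.last k) ∧ r = walkWeight A k P / (k : ℝ) }

/-- Kleene star of `A` (meaningful when `ρ(A) ≤ 0`):
`A*_{ii} = max(0, max_{1 ≤ k ≤ n-1} (A^{⊗k})_{ii})` and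
`A*_{ij} = max_{1 ≤ k ≤ n-1} (A^{⊗k})_{ij}` for `i ≠ j`. -/
noncomputable def kleeneStar {ι : Type*} [Fintype ι] [DecidableEq ι] (A : ι → ι → ℝ)
    (i j : ι) : ℝ :=
  if i = j then max 0 (⨆ m : Fin (Fintype.card ι - 1), mpPow1 A (m : ℕ) i i)
  else ⨆ m : Fin (Fintype.card ι - 1), mpPow1 A (m : ℕ) i j

/-- Max-Łukasiewicz matrix-vector product: `(A ⊗_L x)_i = max_j max(0, a_{ij} + x_j - 1)`. -/
noncomputable def lukMulVec {ι κ : Type*} [Fintype κ] (A : ι → κ → ℝ) (x : κ → ℝ) (i : ι) : ℝ :=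
  ⨆ j, max 0 (A i j + x j - 1)

/-- Max-Łukasiewicz scalar action: `(λ ⊗_L x)_i = max(0, λ + x_i - 1)`. -/
noncomputable def lukSMul {ι : Type*} (lam : ℝ) (x : ι → ℝ) (i : ι) : ℝ :=
  max 0 (lam + x i - 1)

/-- Max-Łukasiewicz matrix-matrix product: `(A ⊗_L B)_{ik} = max_j max(0, a_{ij} + b_{jk} - 1)`. -/
noncomputable def lukMul {ι κ τ : Type*} [Fintype κ] (A : ι → κ → ℝ) (B : κ → τ → ℝ)
    (i : ι) (k : τ) : ℝ :=
  ⨆ j, max 0 (A i j + B j k - 1)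

/-- `lukPow1 A s` is the `(s+1)`-st Łukasiewicz power of `A`, i.e. `A^{⊗_L (s+1)}`. -/
noncomputable def lukPow1 {ι : Type*} [Fintype ι] (A : ι → ι → ℝ) : ℕ → ι → ι → ℝ
  | 0 => A
  | (t + 1) => lukMul A (lukPow1 A t)

/-- Max-plus matrix-vector product of a real matrix with a vector over `ℝ ∪ {-∞}` (`EReal`). -/
noncomputable def mpMulVecE {ι κ : Type*} [Fintype κ] (A : ι → κ → ℝ) (v : κ → EReal)
    (i : ι) : EReal :=
  ⨆ j, ((A i j : EReal) + v j)

/-- Node `i` of the weighted digraph `D(B)` is secure if every walk starting at `i` has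
nonpositive weight. -/
def SecureNode {ι : Type*} (B : ι → ι → ℝ) (i : ι) : Prop :=
  ∀ (len : ℕ) (P : Fin (len + 1) → ι), P 0 = i → walkWeight B len P ≤ 0

/-- The partition `(K, L)` of `{1,…,n}` is secure with respect to `D(B)` (with parameter `λ`):
if `L = ∅` this means `D(B)` is `λ`-secure (every walk has weight `≤ λ`); otherwise it means
that every walk starting in `L` whose all other nodes lie in `K` has nonpositive weight.
(If `L` is everything, the latter condition holds trivially, matching the convention.) -/
def SecurePartition {n : ℕ} (B : Fin n → Fin n → ℝ) (lam : ℝ) (K L : Finset (Fin n)) : Prop :=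
  if L = ∅ then
    ∀ (len : ℕ) (P : Fin (len + 1) → Fin n), walkWeight B len P ≤ lam
  else
    ∀ (len : ℕ) (P : Fin (len + 1) → Fin n),
      P 0 ∈ L → (∀ t : Fin (len + 1), t ≠ 0 → P t ∈ K) → walkWeight B len P ≤ 0

/-!
A solution `x` of `x = (A ⊗ x) ⊕ b` satisfies `a_{ij} + x_j ≤ x_i`, so the weight of any walk
telescopes to at most `x_{start} - x_{end}`, and every cycle has nonpositive weight.

Conversely, if every cycle of length at most `n` has nonpositive weight, cutting repeated nodes
out of a walk never decreases its weight, so every walk is dominated by one of length `< n`.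
Hence `x_i = sup { weight(P) + b_{end(P)} : P a walk starting at i }` is finite, and splitting off
the first step of a walk shows that `x` solves the equation (this is `x = A* ⊗ b`).
-/

variable {ι : Type*}

/-- Walks are sequences `ℕ → ι`, of which only the first `len + 1` terms matter. -/
noncomputable def seqWalkWeight (A : ι → ι → ℝ) (len : ℕ) (P : ℕ → ι) : ℝ :=
  ∑ t ∈ range len, A (P t) (P (t + 1))

section WalkWeight

variable (A : ι → ι → ℝ)

lemma seqWalkWeight_congr {len : ℕ} {P Q : ℕ → ι} (h : ∀ t ≤ len, P t = Q t) :
    seqWalkWeight A len P = seqWalkWeight A len Q :=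
  sum_congr rfl fun t ht => by
    have := mem_range.mp ht
    rw [h t (by omega), h (t + 1) (by omega)]

lemma seqWalkWeight_add (a c : ℕ) (P : ℕ → ι) :
    seqWalkWeight A (a + c) P = seqWalkWeight A a P + seqWalkWeight A c (fun u => P (a + u)) := by
  simp only [seqWalkWeight, sum_range_add, Nat.add_assoc]

lemma seqWalkWeight_succ (len : ℕ) (P : ℕ → ι) :
    seqWalkWeight A (len + 1) P = A (P 0) (P 1) + seqWalkWeight A len (fun t => P (t + 1)) := by
  rw [seqWalkWeight, sum_range_succ', add_comm]
  rfl

lemma seqWalkWeight_le_mul {C : ℝ} (hC : ∀ i j, A i j ≤ C) (len : ℕ) (P : ℕ → ι) :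
    seqWalkWeight A len P ≤ len * C := by
  simpa [seqWalkWeight] using sum_le_card_nsmul (range len) _ C fun t _ => hC (P t) (P (t + 1))

lemma walkWeight_eq_seqWalkWeight (len : ℕ) (P : ℕ → ι) :
    walkWeight A len (fun t => P t) = seqWalkWeight A len P :=
  Fin.sum_univ_eq_sum_range (fun t => A (P t) (P (t + 1))) len

lemma seqWalkWeight_le_sub_of_forall_add_le {x : ι → ℝ} (hx : ∀ i j, A i j + x j ≤ x i)
    (len : ℕ) (P : ℕ → ι) : seqWalkWeight A len P ≤ x (P 0) - x (P len) :=
  calc seqWalkWeight A len P ≤ ∑ t ∈ range len, (x (P t) - x (P (t + 1))) :=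
        sum_le_sum fun t _ => by linarith [hx (P t) (P (t + 1))]
    _ = x (P 0) - x (P len) := sum_range_sub' (fun t => x (P t)) len

/-- The walk `P` with the closed subwalk `P s → ⋯ → P (s + c)` cut out. -/
def cutWalk (P : ℕ → ι) (s c : ℕ) (u : ℕ) : ι :=
  if u ≤ s then P u else P (u + c)

lemma cutWalk_of_le (P : ℕ → ι) {s c u : ℕ} (hu : u ≤ s) : cutWalk P s c u = P u :=
  if_pos hu

lemma cutWalk_add {P : ℕ → ι} {s c : ℕ} (hP : P s = P (s + c)) (u : ℕ) :
    cutWalk P s c (s + u) = P (s + c + u) := by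
  rcases u with _ | u
  · simpa [cutWalk] using hP
  · simp only [cutWalk, if_neg (show ¬ s + (u + 1) ≤ s by omega)]
    congr 1
    omega

lemma seqWalkWeight_cutWalk {P : ℕ → ι} {s c : ℕ} (hP : P s = P (s + c)) (d : ℕ) :
    seqWalkWeight A (s + c + d) P =
      seqWalkWeight A (s + d) (cutWalk P s c) + seqWalkWeight A c (fun u => P (s + u)) := by
  simp only [seqWalkWeight_add, funext (cutWalk_add hP),
    seqWalkWeight_congr A fun t ht => cutWalk_of_le P ht]
  ring

end WalkWeight

lemma Fin.exists_eq_comp_val {α : Type*} {len : ℕ} (P : Fin (len + 1) → α) :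
    ∃ Q : ℕ → α, P = fun t : Fin (len + 1) => Q t :=
  ⟨fun t => P ⟨min t len, by omega⟩,
    funext fun t => congrArg P (Fin.ext (Nat.min_eq_left (Nat.le_of_lt_succ t.isLt)).symm)⟩

lemma le_mpMulVec {κ : Type*} [Fintype κ] (A : ι → κ → ℝ) (x : κ → ℝ) (i : ι) (j : κ) :
    A i j + x j ≤ mpMulVec A x i :=
  le_ciSup (f := fun j => A i j + x j) (Set.finite_range _).bddAbove j

def walkValues (A : ι → ι → ℝ) (b : ι → ℝ) (i : ι) : Set ℝ :=
  {w | ∃ len P, P 0 = i ∧ w = seqWalkWeight A len P + b (P len)}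

noncomputable def maxWalkValue (A : ι → ι → ℝ) (b : ι → ℝ) (i : ι) : ℝ :=
  sSup (walkValues A b i)

variable [Fintype ι]

def NonposCycleWeights (A : ι → ι → ℝ) : Prop :=
  ∀ k, 1 ≤ k → k ≤ Fintype.card ι → ∀ P : ℕ → ι, P k = P 0 → seqWalkWeight A k P ≤ 0

lemma maxCycleMean_nonpos_iff (A : ι → ι → ℝ) : maxCycleMean A ≤ 0 ↔ NonposCycleWeights A := by
  constructor
  · intro hρ k hk1 hkn P hP
    obtain ⟨C, hC⟩ := Finite.exists_le fun p : ι × ι => A p.1 p.2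
    have hbdd : BddAbove {r | ∃ k, 1 ≤ k ∧ k ≤ Fintype.card ι ∧ ∃ P : Fin (k + 1) → ι,
        P 0 = P (Fin.last k) ∧ r = walkWeight A k P / (k : ℝ)} := by
      refine ⟨C, ?_⟩
      rintro r ⟨k, hk1, -, P, -, rfl⟩
      obtain ⟨Q, rfl⟩ := Fin.exists_eq_comp_val P
      rw [walkWeight_eq_seqWalkWeight, div_le_iff₀ (by positivity), mul_comm]
      exact seqWalkWeight_le_mul A (fun i j => hC (i, j)) k Q
    have hmean : seqWalkWeight A k P / k ≤ 0 :=
      (le_csSup hbdd ⟨k, hk1, hkn, fun t => P t, by simp [hP],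
        by rw [walkWeight_eq_seqWalkWeight]⟩).trans hρ
    rwa [div_le_iff₀ (by positivity), zero_mul] at hmean
  · refine fun hA => Real.sSup_nonpos fun r ⟨k, hk1, hkn, P, hP, hr⟩ => ?_
    obtain ⟨Q, rfl⟩ := Fin.exists_eq_comp_val P
    rw [hr, walkWeight_eq_seqWalkWeight]
    exact div_nonpos_of_nonpos_of_nonneg (hA k hk1 hkn Q (by simpa using hP.symm)) k.cast_nonneg

lemma nonposCycleWeights_of_forall_add_le {A : ι → ι → ℝ} {x : ι → ℝ}
    (hx : ∀ i j, A i j + x j ≤ x i) : NonposCycleWeights A := fun k _ _ P hP => by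
  linarith [seqWalkWeight_le_sub_of_forall_add_le A hx k P, congrArg x hP]

lemma exists_repeat_le_card (P : ℕ → ι) :
    ∃ s c, 0 < c ∧ s + c ≤ Fintype.card ι ∧ P s = P (s + c) := by
  obtain ⟨u, v, huv, he⟩ :=
    Fintype.exists_ne_map_eq_of_card_lt (fun u : Fin (Fintype.card ι + 1) => P u) (by simp)
  have hu := u.isLt
  have hv := v.isLt
  rcases huv.lt_or_gt with h | h
  · exact ⟨u, v - u, by omega, by omega, by rwa [Nat.add_sub_cancel' h.le]⟩
  · exact ⟨v, u - v, by omega, by omega, by rw [Nat.add_sub_cancel' h.le]; exact he.symm⟩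

namespace NonposCycleWeights

variable {A : ι → ι → ℝ} (hA : NonposCycleWeights A)
include hA

lemma exists_short_walk_ge (len : ℕ) (P : ℕ → ι) :
    ∃ len' < Fintype.card ι, ∃ P' : ℕ → ι, P' 0 = P 0 ∧ P' len' = P len ∧
      seqWalkWeight A len P ≤ seqWalkWeight A len' P' := by
  induction len using Nat.strong_induction_on generalizing P with
  | _ len ih =>
  by_cases hlen : len < Fintype.card ι
  · exact ⟨len, hlen, P, rfl, rfl, le_rfl⟩
  obtain ⟨s, c, hc, hsc, hP⟩ := exists_repeat_le_card P
  obtain ⟨d, rfl⟩ : ∃ d, len = s + c + d := ⟨len - (s + c), by omega⟩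
  have hcycle : seqWalkWeight A c (fun u => P (s + u)) ≤ 0 :=
    hA c hc (by omega) _ (by simpa using hP.symm)
  obtain ⟨len', hlen', P', h0, hend, hle⟩ := ih (s + d) (by omega) (cutWalk P s c)
  refine ⟨len', hlen', P', by rw [h0, cutWalk_of_le P (Nat.zero_le s)],
    by rw [hend, cutWalk_add hP], ?_⟩
  rw [seqWalkWeight_cutWalk A hP]
  linarith

lemma bddAbove_walkValues (b : ι → ℝ) (i : ι) : BddAbove (walkValues A b i) := by
  obtain ⟨C, hC⟩ := Finite.exists_le fun p : ι × ι => A p.1 p.2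
  obtain ⟨B, hB⟩ := Finite.exists_le b
  refine ⟨Fintype.card ι * max C 0 + B, ?_⟩
  rintro w ⟨len, P, -, rfl⟩
  obtain ⟨len', hlen', P', -, hend, hle⟩ := hA.exists_short_walk_ge len P
  have hshort :=
    seqWalkWeight_le_mul A (fun i j => (hC (i, j)).trans (le_max_left C 0)) len' P'
  have hlen : (len' : ℝ) * max C 0 ≤ Fintype.card ι * max C 0 :=
    mul_le_mul_of_nonneg_right (by exact_mod_cast hlen'.le) (le_max_right C 0)
  linarith [hB (P len)]

lemma le_maxWalkValue (b : ι → ℝ) (len : ℕ) (P : ℕ → ι) :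
    seqWalkWeight A len P + b (P len) ≤ maxWalkValue A b (P 0) :=
  le_csSup (hA.bddAbove_walkValues b _) ⟨len, P, rfl, rfl⟩

lemma add_le_maxWalkValue (b : ι → ℝ) (i j : ι) :
    A i j + maxWalkValue A b j ≤ maxWalkValue A b i := by
  suffices maxWalkValue A b j ≤ maxWalkValue A b i - A i j by linarith
  refine csSup_le ⟨_, 0, fun _ => j, rfl, rfl⟩ ?_
  rintro w ⟨len, P, rfl, rfl⟩
  have hcons := hA.le_maxWalkValue b (len + 1) (Stream'.cons i P)
  have hsplit : seqWalkWeight A (len + 1) (Stream'.cons i P) = A i (P 0) + seqWalkWeight A len P :=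
    seqWalkWeight_succ A len _
  change seqWalkWeight A (len + 1) (Stream'.cons i P) + b (P len) ≤ maxWalkValue A b i at hcons
  linarith

lemma maxWalkValue_le (b : ι → ℝ) (i : ι) :
    maxWalkValue A b i ≤ max (mpMulVec A (maxWalkValue A b) i) (b i) := by
  refine csSup_le ⟨_, 0, fun _ => i, rfl, rfl⟩ ?_
  rintro w ⟨_ | len, P, rfl, rfl⟩
  · simp [seqWalkWeight]
  · rw [seqWalkWeight_succ]
    calc A (P 0) (P 1) + seqWalkWeight A len (fun t => P (t + 1)) + b (P (len + 1))
        ≤ A (P 0) (P 1) + maxWalkValue A b (P 1) := by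
          linarith [hA.le_maxWalkValue b len fun t => P (t + 1)]
      _ ≤ mpMulVec A (maxWalkValue A b) (P 0) := le_mpMulVec A _ _ _
      _ ≤ _ := le_max_left _ _

lemma maxWalkValue_eq_max (b : ι → ℝ) (i : ι) :
    maxWalkValue A b i = max (mpMulVec A (maxWalkValue A b) i) (b i) := by
  have : Nonempty ι := ⟨i⟩
  refine (hA.maxWalkValue_le b i).antisymm (max_le ?_ ?_)
  · exact ciSup_le fun j => hA.add_le_maxWalkValue b i j
  · simpa [seqWalkWeight] using hA.le_maxWalkValue b 0 fun _ => i

end NonposCycleWeights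

theorem exists_eq_max_mpMulVec_iff (A : ι → ι → ℝ) (b : ι → ℝ) :
    (∃ x : ι → ℝ, ∀ i, x i = max (mpMulVec A x i) (b i)) ↔ maxCycleMean A ≤ 0 := by
  rw [maxCycleMean_nonpos_iff]
  constructor
  · rintro ⟨x, hx⟩
    exact nonposCycleWeights_of_forall_add_le fun i j =>
      (le_mpMulVec A x i j).trans ((le_max_left _ _).trans (hx i).ge)
  · exact fun hA => ⟨maxWalkValue A b, hA.maxWalkValue_eq_max b⟩

theorem stmt1_general {n : ℕ} (A : Fin n → Fin n → ℝ) (b : Fin n → ℝ) :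
    (∃ x : Fin n → ℝ, ∀ i, x i = max (mpMulVec A x i) (b i)) ↔ maxCycleMean A ≤ 0 :=
  exists_eq_max_mpMulVec_iff A b

/-- the Bellman equation `x = (A ⊗ x) ⊕ b` has a real solution iff `ρ(A) ≤ 0`. -/
theorem stmt1 {n : ℕ} (hn : 0 < n) (A : Fin n → Fin n → ℝ) (b : Fin n → ℝ) :
    (∃ x : Fin n → ℝ, ∀ i, x i = max (mpMulVec A x i) (b i)) ↔ maxCycleMean A ≤ 0 :=
  stmt1_general A b
end

section
/- Let A ∈ [0,1]^{n×n}, λ ∈ [0,1], and let x ∈ [0,1]^n satisfy x_i ≤ 1 − λ for all i. Then x is a Łukasiewicz eigenvector of A associated with λ (i.e., A ⊗_L x = λ ⊗_L x) if and only if x_j ≤ min(1 − λ, min_i (1 − a_{ij})) for all j. -/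
open Finset

theorem lukSMul_eq_zero {ι : Type*} {lam : ℝ} {x : ι → ℝ} {i : ι} (h : x i ≤ 1 - lam) :
    lukSMul lam x i = 0 :=
  max_eq_left (by linarith)

theorem lukMulVec_eq_zero_iff {ι κ : Type*} [Fintype κ] (A : ι → κ → ℝ) (x : κ → ℝ)
    (i : ι) : lukMulVec A x i = 0 ↔ ∀ j, A i j + x j ≤ 1 := by
  constructor
  · intro h j
    have hj : max 0 (A i j + x j - 1) ≤ lukMulVec A x i :=
      le_ciSup (Set.finite_range fun j => max 0 (A i j + x j - 1)).bddAbove j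
    linarith [le_max_right 0 (A i j + x j - 1)]
  · intro h
    exact le_antisymm (Real.iSup_le (fun j => max_le le_rfl (by linarith [h j])) le_rfl)
      (Real.iSup_nonneg fun _ => le_max_left _ _)

theorem le_iInf_one_sub_iff {ι : Type*} [Finite ι] [Nonempty ι] (a : ι → ℝ) (t : ℝ) :
    t ≤ ⨅ i, (1 - a i) ↔ ∀ i, a i + t ≤ 1 := by
  rw [le_ciInf_iff (Set.finite_range _).bddBelow]
  exact forall_congr' fun i => by constructor <;> intro <;> linarith

theorem stmt4_general {n : ℕ} (A : Fin n → Fin n → ℝ) (lam : ℝ) (x : Fin n → ℝ)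
    (hbg : ∀ i, x i ≤ 1 - lam) :
    (∀ i, lukMulVec A x i = lukSMul lam x i) ↔
      ∀ j, x j ≤ min (1 - lam) (⨅ i, (1 - A i j)) := by
  have hcol (j : Fin n) : x j ≤ ⨅ i, (1 - A i j) ↔ ∀ i, A i j + x j ≤ 1 :=
    haveI : Nonempty (Fin n) := ⟨j⟩
    le_iInf_one_sub_iff (A · j) (x j)
  simp only [lukSMul_eq_zero (hbg _), lukMulVec_eq_zero_iff, le_min_iff, hcol, hbg, true_and]
  exact forall_comm

/-- characterization of background Łukasiewicz eigenvectors: a vector with all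
components `≤ 1 - λ` is an eigenvector iff `x_j ≤ min(1 - λ, min_i (1 - a_{ij}))` for all `j`. -/
theorem stmt4 {n : ℕ} (A : Fin n → Fin n → ℝ) (hA : ∀ i j, A i j ∈ Set.Icc (0 : ℝ) 1)
    (lam : ℝ) (hlam : lam ∈ Set.Icc (0 : ℝ) 1)
    (x : Fin n → ℝ) (hx : ∀ i, x i ∈ Set.Icc (0 : ℝ) 1) (hbg : ∀ i, x i ≤ 1 - lam) :
    (∀ i, lukMulVec A x i = lukSMul lam x i) ↔
      ∀ j, x j ≤ min (1 - lam) (⨅ i, (1 - A i j)) :=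
  stmt4_general A lam x hbg
end

section
/- Let A ∈ [0,1]^{n×n} and λ ∈ [0,1]. Then A has a pure Łukasiewicz eigenvector associated with λ if and only if ρ(A) ≤ λ and max_{i,j} ((A^(λ))*)_{ij} ≤ λ. -/
open Finset

/-!
Put `B = A^(λ)` and `y = x - (1 - λ)`. A pure eigenvector `x` is exactly a vector
`0 ≤ y ≤ λ` with `y = max(0, B ⊗ y)`, and the proof becomes max-plus spectral theory of `B`.
Such a `y` satisfies `B ⊗ y ≤ y`; telescoping along walks then bounds cycle weights by `0`
(so `ρ(A) ≤ λ`) and the weight of every walk from `i` to `j` by `y i - y j ≤ λ` (so `B* ≤ λ`).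
Conversely, if `ρ(B) ≤ 0`, cutting cycles out of long walks shows that no max-plus power of `B`
exceeds `B*`, and then the row maxima `y i = max_k B*_{ik}` satisfy `y = max(0, B ⊗ y)`.
-/

section MaxPlus

variable {ι : Type*}

/-- The weight of the walk `Q 0 → ⋯ → Q k`; indexing walks by `ℕ` rather than `Fin (k + 1)`
makes cutting and splicing them painless. -/
noncomputable def pathWeight (B : ι → ι → ℝ) (k : ℕ) (Q : ℕ → ι) : ℝ :=
  ∑ t ∈ range k, B (Q t) (Q (t + 1))

theorem walkWeight_eq_pathWeight (B : ι → ι → ℝ) (k : ℕ) (Q : ℕ → ι) :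
    walkWeight B k (fun t : Fin (k + 1) => Q t) = pathWeight B k Q :=
  Fin.sum_univ_eq_sum_range (fun t => B (Q t) (Q (t + 1))) k

theorem pathWeight_succ' (B : ι → ι → ℝ) (k : ℕ) (Q : ℕ → ι) :
    pathWeight B (k + 1) Q = B (Q 0) (Q 1) + pathWeight B k (fun t => Q (t + 1)) := by
  rw [pathWeight, sum_range_succ', add_comm]
  rfl

theorem pathWeight_splice (B : ι → ι → ℝ) (Q : ℕ → ι) (a d r : ℕ) (h : Q a = Q (a + d)) :
    pathWeight B (a + d + r) Q =
      pathWeight B (a + r) (fun t => if t < a then Q t else Q (t + d)) +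
        pathWeight B d (fun t => Q (a + t)) := by
  have prefix_eq : ∀ t ∈ range a, B (if t < a then Q t else Q (t + d))
      (if t + 1 < a then Q (t + 1) else Q (t + 1 + d)) = B (Q t) (Q (t + 1)) := by
    intro t ht
    have ht : t < a := mem_range.1 ht
    rcases lt_or_eq_of_le (Nat.succ_le_of_lt ht) with hlt | rfl
    · simp [ht, hlt]
    · simp [ht, ← h]
  have suffix_eq : ∀ t ∈ range r, B (if a + t < a then Q (a + t) else Q (a + t + d))
      (if a + t + 1 < a then Q (a + t + 1) else Q (a + t + 1 + d)) =
        B (Q (a + d + t)) (Q (a + d + t + 1)) := by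
    intro t _
    simp only [show ¬a + t < a by omega, show ¬a + t + 1 < a by omega, if_false,
      show a + t + d = a + d + t by omega, show a + t + 1 + d = a + d + t + 1 by omega]
  simp only [pathWeight]
  rw [add_assoc, sum_range_add, sum_range_add, sum_range_add, sum_congr rfl prefix_eq,
    sum_congr rfl suffix_eq]
  simp only [add_assoc]
  ring

/-- `B ⊗ y ≤ y` in max-plus algebra. -/
def IsSubeigenvector (B : ι → ι → ℝ) (y : ι → ℝ) : Prop :=
  ∀ i j, B i j + y j ≤ y i

theorem IsSubeigenvector.walkWeight_le {B : ι → ι → ℝ} {y : ι → ℝ}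
    (hy : IsSubeigenvector B y) :
    ∀ (k : ℕ) (P : Fin (k + 1) → ι), walkWeight B k P ≤ y (P 0) - y (P (Fin.last k))
  | 0, P => by simp [walkWeight]
  | k + 1, P => by
    have hprefix := hy.walkWeight_le k fun t => P t.castSucc
    have hlast := hy (P (Fin.last k).castSucc) (P (Fin.last (k + 1)))
    rw [walkWeight, Fin.sum_univ_castSucc] at *
    simp only [Fin.succ_castSucc, Fin.succ_last, Fin.castSucc_zero] at *
    linarith

variable [Fintype ι]

theorem exists_lt_le_card_map_eq (Q : ℕ → ι) :
    ∃ a b, a < b ∧ b ≤ Fintype.card ι ∧ Q a = Q b := by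
  obtain ⟨s, t, hst, h⟩ :=
    Fintype.exists_ne_map_eq_of_card_lt (fun u : Fin (Fintype.card ι + 1) => Q u) (by simp)
  rcases lt_or_gt_of_ne hst with hlt | hlt
  · exact ⟨s, t, hlt, Nat.lt_succ_iff.1 t.isLt, h⟩
  · exact ⟨t, s, hlt, Nat.lt_succ_iff.1 s.isLt, h.symm⟩

def CyclesNonpos (B : ι → ι → ℝ) : Prop :=
  ∀ k, 1 ≤ k → k ≤ Fintype.card ι →
    ∀ P : Fin (k + 1) → ι, P 0 = P (Fin.last k) → walkWeight B k P ≤ 0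

namespace CyclesNonpos

variable {B : ι → ι → ℝ}

theorem pathWeight_nonpos (h : CyclesNonpos B) {k : ℕ} (hk1 : 1 ≤ k)
    (hkn : k ≤ Fintype.card ι) {Q : ℕ → ι} (hQ : Q 0 = Q k) : pathWeight B k Q ≤ 0 := by
  rw [← walkWeight_eq_pathWeight]
  exact h k hk1 hkn _ (by simpa using hQ)

theorem exists_shorter_path (h : CyclesNonpos B) {k : ℕ} (hk : Fintype.card ι ≤ k)
    (Q : ℕ → ι) : ∃ k' < k, ∃ Q' : ℕ → ι, Q' 0 = Q 0 ∧ Q' k' = Q k ∧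
      pathWeight B k Q ≤ pathWeight B k' Q' := by
  obtain ⟨a, b, hab, hb, hQ⟩ := exists_lt_le_card_map_eq Q
  obtain ⟨d, r, rfl, rfl⟩ : ∃ d r, b = a + d ∧ k = a + d + r := ⟨b - a, k - b, by omega, by omega⟩
  refine ⟨a + r, by omega, fun t => if t < a then Q t else Q (t + d), ?_, ?_, ?_⟩
  · rcases Nat.eq_zero_or_pos a with rfl | ha
    · simpa using hQ.symm
    · simp [ha]
  · simp only [show ¬a + r < a by omega, if_false, show a + r + d = a + d + r by omega]
  · have hcycle : pathWeight B d (fun t => Q (a + t)) ≤ 0 :=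
      h.pathWeight_nonpos (by omega) (by omega) (by simpa using hQ)
    rw [pathWeight_splice B Q a d r hQ]
    linarith

theorem exists_short_path (h : CyclesNonpos B) (k : ℕ) (Q : ℕ → ι) :
    ∃ k' < Fintype.card ι, ∃ Q' : ℕ → ι, Q' 0 = Q 0 ∧ Q' k' = Q k ∧
      pathWeight B k Q ≤ pathWeight B k' Q' := by
  induction k using Nat.strong_induction_on generalizing Q with
  | _ k ih =>
    by_cases hk : k < Fintype.card ι
    · exact ⟨k, hk, Q, rfl, rfl, le_rfl⟩
    obtain ⟨k', hk', Q', h0, hend, hle⟩ := h.exists_shorter_path (not_lt.1 hk) Q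
    obtain ⟨k'', hk'', Q'', h0', hend', hle'⟩ := ih k' hk' Q'
    exact ⟨k'', hk'', Q'', h0'.trans h0, hend'.trans hend, hle.trans hle'⟩

end CyclesNonpos

theorem add_mpPow1_le_mpPow1_succ (B : ι → ι → ℝ) (s : ℕ) (i t j : ι) :
    B i t + mpPow1 B s t j ≤ mpPow1 B (s + 1) i j :=
  le_ciSup (f := fun t => B i t + mpPow1 B s t j) (Finite.bddAbove_range _) t

theorem pathWeight_le_mpPow1 (B : ι → ι → ℝ) :
    ∀ (s : ℕ) (Q : ℕ → ι), pathWeight B (s + 1) Q ≤ mpPow1 B s (Q 0) (Q (s + 1))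
  | 0, Q => by simp [pathWeight, mpPow1]
  | s + 1, Q => by
    rw [pathWeight_succ']
    exact (add_le_add_right (pathWeight_le_mpPow1 B s fun t => Q (t + 1)) _).trans
      (add_mpPow1_le_mpPow1_succ B s _ _ _)

theorem exists_pathWeight_eq_mpPow1 (B : ι → ι → ℝ) :
    ∀ (s : ℕ) (i j : ι), ∃ Q : ℕ → ι, Q 0 = i ∧ Q (s + 1) = j ∧
      pathWeight B (s + 1) Q = mpPow1 B s i j
  | 0, i, j => ⟨fun t => if t = 0 then i else j, rfl, rfl, by simp [pathWeight, mpPow1]⟩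
  | s + 1, i, j => by
    have : Nonempty ι := ⟨i⟩
    obtain ⟨t, ht⟩ := Finite.exists_max fun t => B i t + mpPow1 B s t j
    obtain ⟨Q, rfl, hend, hQ⟩ := exists_pathWeight_eq_mpPow1 B s t j
    refine ⟨fun | 0 => i | u + 1 => Q u, rfl, hend, ?_⟩
    rw [pathWeight_succ']
    exact hQ ▸ le_antisymm (add_mpPow1_le_mpPow1_succ B s i _ j) (ciSup_le ht)

namespace IsSubeigenvector

variable {B : ι → ι → ℝ} {y : ι → ℝ}

theorem of_iSup_max_eq (h : ∀ i, ⨆ j, max 0 (B i j + y j) = y i) : IsSubeigenvector B y :=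
  fun i j => (le_max_right _ _).trans <|
    (le_ciSup (f := fun j => max 0 (B i j + y j)) (Finite.bddAbove_range _) j).trans_eq (h i)

theorem cyclesNonpos (hy : IsSubeigenvector B y) : CyclesNonpos B := fun k _ _ P hP => by
  have := hy.walkWeight_le k P
  rwa [hP, sub_self] at this

theorem mpPow1_le (hy : IsSubeigenvector B y) : ∀ (s : ℕ) (i j : ι), mpPow1 B s i j ≤ y i - y j
  | 0, i, j => by
    show B i j ≤ y i - y j
    linarith [hy i j]
  | s + 1, i, j => by
    have : Nonempty ι := ⟨i⟩
    refine ciSup_le fun t => ?_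
    linarith [hy.mpPow1_le s t j, hy i t]

end IsSubeigenvector

variable [DecidableEq ι]

theorem kleeneStar_self_nonneg (B : ι → ι → ℝ) (i : ι) : 0 ≤ kleeneStar B i i := by
  rw [kleeneStar, if_pos rfl]
  exact le_max_left _ _

theorem mpPow1_le_kleeneStar_of_lt (B : ι → ι → ℝ) {m : ℕ} (hm : m < Fintype.card ι - 1)
    (i j : ι) : mpPow1 B m i j ≤ kleeneStar B i j := by
  have hle : mpPow1 B m i j ≤ ⨆ m : Fin (Fintype.card ι - 1), mpPow1 B m i j :=
    le_ciSup (f := fun m : Fin (Fintype.card ι - 1) => mpPow1 B m i j)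
      (Finite.bddAbove_range _) ⟨m, hm⟩
  unfold kleeneStar
  split_ifs with h
  · subst h
    exact hle.trans (le_max_right _ _)
  · exact hle

theorem kleeneStar_le (B : ι → ι → ℝ) {i j : ι} {c : ℝ} (hc : 0 ≤ c)
    (h : ∀ m < Fintype.card ι - 1, mpPow1 B m i j ≤ c) : kleeneStar B i j ≤ c := by
  have hsup : ⨆ m : Fin (Fintype.card ι - 1), mpPow1 B m i j ≤ c :=
    Real.iSup_le (fun m => h m m.isLt) hc
  unfold kleeneStar
  split_ifs with h
  · subst h
    exact max_le hc hsup
  · exact hsup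

theorem pathWeight_le_kleeneStar (B : ι → ι → ℝ) {k : ℕ} (hk : k < Fintype.card ι)
    (Q : ℕ → ι) : pathWeight B k Q ≤ kleeneStar B (Q 0) (Q k) := by
  cases k with
  | zero => simpa [pathWeight] using kleeneStar_self_nonneg B (Q 0)
  | succ m =>
    exact (pathWeight_le_mpPow1 B m Q).trans (mpPow1_le_kleeneStar_of_lt B (by omega) _ _)

theorem CyclesNonpos.mpPow1_le_kleeneStar {B : ι → ι → ℝ} (h : CyclesNonpos B) (s : ℕ)
    (i j : ι) : mpPow1 B s i j ≤ kleeneStar B i j := by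
  obtain ⟨Q, rfl, rfl, hQ⟩ := exists_pathWeight_eq_mpPow1 B s i j
  obtain ⟨k, hk, Q', h0, hend, hle⟩ := h.exists_short_path (s + 1) Q
  calc mpPow1 B s (Q 0) (Q (s + 1)) = pathWeight B (s + 1) Q := hQ.symm
    _ ≤ pathWeight B k Q' := hle
    _ ≤ kleeneStar B (Q' 0) (Q' k) := pathWeight_le_kleeneStar B hk Q'
    _ = kleeneStar B (Q 0) (Q (s + 1)) := by rw [h0, hend]

theorem IsSubeigenvector.kleeneStar_le {B : ι → ι → ℝ} {y : ι → ℝ}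
    (hy : IsSubeigenvector B y) {c : ℝ}
    (hy0 : ∀ i, 0 ≤ y i) (hyc : ∀ i, y i ≤ c) (i j : ι) : kleeneStar B i j ≤ c :=
  _root_.kleeneStar_le B ((hy0 i).trans (hyc i)) fun m _ => by
    linarith [hy.mpPow1_le m i j, hy0 j, hyc i]

theorem CyclesNonpos.exists_iSup_max_eq {B : ι → ι → ℝ} (h : CyclesNonpos B) {c : ℝ}
    (hc : ∀ i j, kleeneStar B i j ≤ c) :
    ∃ y : ι → ℝ, (∀ i, 0 ≤ y i) ∧ (∀ i, y i ≤ c) ∧ ∀ i, ⨆ j, max 0 (B i j + y j) = y i := by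
  set y : ι → ℝ := fun i => ⨆ k, kleeneStar B i k
  have le_y (i k : ι) : kleeneStar B i k ≤ y i :=
    le_ciSup (f := kleeneStar B i) (Finite.bddAbove_range _) k
  have y_nonneg (i : ι) : 0 ≤ y i := (kleeneStar_self_nonneg B i).trans (le_y i i)
  have mpPow1_le_y (s : ℕ) (i k : ι) : mpPow1 B s i k ≤ y i :=
    (h.mpPow1_le_kleeneStar s i k).trans (le_y i k)
  have y_le {i : ι} {c : ℝ} (hc : 0 ≤ c) (hp : ∀ s k, mpPow1 B s i k ≤ c) : y i ≤ c :=
    Real.iSup_le (fun k => kleeneStar_le B hc fun m _ => hp m k) hc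
  have hsub : IsSubeigenvector B y := fun i j => by
    have : y j ≤ y i - B i j := y_le (sub_nonneg.2 (mpPow1_le_y 0 i j)) fun s k => by
      linarith [add_mpPow1_le_mpPow1_succ B s i j k, mpPow1_le_y (s + 1) i k]
    linarith
  refine ⟨y, y_nonneg, fun i => Real.iSup_le (hc i) ((kleeneStar_self_nonneg B i).trans (hc i i)),
    fun i => ?_⟩
  have : Nonempty ι := ⟨i⟩
  set T := ⨆ j, max 0 (B i j + y j)
  have le_T (j : ι) : max 0 (B i j + y j) ≤ T :=
    le_ciSup (f := fun j => max 0 (B i j + y j)) (Finite.bddAbove_range _) j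
  refine le_antisymm (ciSup_le fun j => max_le (y_nonneg i) (hsub i j)) (y_le ?_ fun s k => ?_)
  · exact (le_max_left _ _).trans (le_T i)
  · cases s with
    | zero =>
      show B i k ≤ T
      linarith [y_nonneg k, le_max_right 0 (B i k + y k), le_T k]
    | succ s =>
      exact ciSup_le fun t => by
        linarith [mpPow1_le_y s t k, le_max_right 0 (B i t + y t), le_T t]

end MaxPlus

section CycleMean

variable {ι : Type*}

theorem walkWeight_sub_const (A : ι → ι → ℝ) (μ : ℝ) (k : ℕ) (P : Fin (k + 1) → ι) :
    walkWeight (fun i j => A i j - μ) k P = walkWeight A k P - k * μ := by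
  simp [walkWeight, sum_sub_distrib]

variable [Fintype ι]

theorem div_le_maxCycleMean (A : ι → ι → ℝ) {k : ℕ} (hk1 : 1 ≤ k) (hkn : k ≤ Fintype.card ι)
    (P : Fin (k + 1) → ι) (hP : P 0 = P (Fin.last k)) : walkWeight A k P / k ≤ maxCycleMean A := by
  refine le_csSup (Set.Finite.bddAbove ?_) ⟨k, hk1, hkn, P, hP, rfl⟩
  refine (Set.finite_iUnion fun m : Fin (Fintype.card ι + 1) =>
    Set.finite_range fun P : Fin (m + 1) → ι => walkWeight A m P / m).subset ?_
  rintro _ ⟨m, -, hm, P, -, rfl⟩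
  exact Set.mem_iUnion.2 ⟨⟨m, Nat.lt_succ_of_le hm⟩, P, rfl⟩

theorem maxCycleMean_le_iff (A : ι → ι → ℝ) {μ : ℝ} (hμ : 0 ≤ μ) :
    maxCycleMean A ≤ μ ↔ CyclesNonpos (fun i j => A i j - μ) := by
  constructor
  · intro h k hk1 hkn P hP
    have hmean := (div_le_maxCycleMean A hk1 hkn P hP).trans h
    rw [div_le_iff₀ (by exact_mod_cast hk1)] at hmean
    rw [walkWeight_sub_const]
    linarith
  · refine fun h => Real.sSup_le ?_ hμ
    rintro _ ⟨k, hk1, hkn, P, hP, rfl⟩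
    have hcycle := h k hk1 hkn P hP
    rw [walkWeight_sub_const] at hcycle
    rw [div_le_iff₀ (by exact_mod_cast hk1)]
    linarith

end CycleMean

theorem lukMulVec_eq_iSup_max_sub {ι κ : Type*} [Fintype κ] (A : ι → κ → ℝ) (x : κ → ℝ)
    (lam : ℝ) (i : ι) :
    lukMulVec A x i = ⨆ j, max 0 ((A i j - lam) + (x j - (1 - lam))) := by
  simp only [lukMulVec]
  congr! 3
  ring

theorem lukSMul_eq_sub {ι : Type*} {lam : ℝ} {x : ι → ℝ} {i : ι} (h : 1 - lam ≤ x i) :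
    lukSMul lam x i = x i - (1 - lam) := by
  rw [lukSMul, max_eq_right (by linarith)]
  ring

theorem stmt7_general {n : ℕ} (A : Fin n → Fin n → ℝ) (lam : ℝ) (hlam : lam ∈ Set.Icc (0 : ℝ) 1) :
    (∃ x : Fin n → ℝ, (∀ i, x i ∈ Set.Icc (0 : ℝ) 1) ∧ (∀ i, 1 - lam ≤ x i) ∧
        ∀ i, lukMulVec A x i = lukSMul lam x i) ↔
      (maxCycleMean A ≤ lam ∧
        ∀ i j, kleeneStar (fun i j => A i j - lam) i j ≤ lam) := by
  rw [maxCycleMean_le_iff A hlam.1]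
  constructor
  · rintro ⟨x, hx, hpure, heig⟩
    have hsub : IsSubeigenvector (fun i j => A i j - lam) (fun i => x i - (1 - lam)) :=
      .of_iSup_max_eq fun i => by
        rw [← lukMulVec_eq_iSup_max_sub, heig, lukSMul_eq_sub (hpure i)]
    exact ⟨hsub.cyclesNonpos, hsub.kleeneStar_le (fun i => by linarith [hpure i])
      (fun i => by linarith [(hx i).2])⟩
  · rintro ⟨hcyc, hstar⟩
    obtain ⟨y, hy0, hyc, hfix⟩ := hcyc.exists_iSup_max_eq hstar
    refine ⟨fun i => y i + (1 - lam), fun i => ⟨by linarith [hy0 i, hlam.2], by linarith [hyc i]⟩,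
      fun i => by linarith [hy0 i], fun i => ?_⟩
    rw [lukMulVec_eq_iSup_max_sub A _ lam, lukSMul_eq_sub (by linarith [hy0 i])]
    simpa using hfix i

/-- `A` has a pure Łukasiewicz eigenvector associated with `λ` iff `ρ(A) ≤ λ` and
`max_{i,j} ((A^{(λ)})*)_{ij} ≤ λ`. -/
theorem stmt7 {n : ℕ} (hn : 0 < n) (A : Fin n → Fin n → ℝ)
    (hA : ∀ i j, A i j ∈ Set.Icc (0 : ℝ) 1) (lam : ℝ) (hlam : lam ∈ Set.Icc (0 : ℝ) 1) :
    (∃ x : Fin n → ℝ, (∀ i, x i ∈ Set.Icc (0 : ℝ) 1) ∧ (∀ i, 1 - lam ≤ x i) ∧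
        ∀ i, lukMulVec A x i = lukSMul lam x i) ↔
      (maxCycleMean A ≤ lam ∧
        ∀ i j, kleeneStar (fun i j => A i j - lam) i j ≤ lam) :=
  stmt7_general A lam hlam
end

section
/- Let A ∈ [0,1]^{n×n} and λ ∈ (0,1]. Then A has a pure Łukasiewicz eigenvector associated with λ if and only if the weighted digraph D(A^(λ)) is λ-secure, i.e., every walk in D(A^(λ)) has weight at most λ. -/
open Finset

/-!
For a pure vector `x`, put `y = x - (1 - λ) ∈ [0, λ]`; the eigenvector equation becomes the
max-plus fixed point `y i = max 0 (max_j (a_ij - λ + y j))`. Such a `y` is a potential for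
`D(A^(λ))`: `a_ij - λ ≤ y i - y j`, so the weight of a walk telescopes to at most
`y start - y end ≤ λ`. Conversely, if all walks weigh at most `λ`, the largest walk weights
`m i ∈ [0, λ]` from each node satisfy exactly that fixed-point (Bellman) equation, so
`x = 1 - λ + m` is a pure eigenvector.
-/

section Walks

variable {ι : Type*} (B : ι → ι → ℝ)

@[simp]
lemma walkWeight_zero (P : Fin 1 → ι) : walkWeight B 0 P = 0 := by
  simp [walkWeight]

lemma walkWeight_succ (len : ℕ) (P : Fin (len + 2) → ι) :
    walkWeight B (len + 1) P = B (P 0) (P 1) + walkWeight B len (Fin.tail P) := by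
  rw [walkWeight, Fin.sum_univ_succ]
  simp [walkWeight, Fin.tail, Fin.succ_castSucc, -Fin.castSucc_succ]

lemma walkWeight_cons (i : ι) (len : ℕ) (P : Fin (len + 1) → ι) :
    walkWeight B (len + 1) (Fin.cons i P) = B i (P 0) + walkWeight B len P := by
  rw [walkWeight_succ, Fin.cons_zero, Fin.cons_one, Fin.tail_cons]

lemma walkWeight_sub (x : ι → ℝ) :
    ∀ (len : ℕ) (P : Fin (len + 1) → ι),
      walkWeight (fun i j => x i - x j) len P = x (P 0) - x (P (Fin.last len))
  | 0, P => by simp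
  | len + 1, P => by
    rw [walkWeight_succ, walkWeight_sub x len]
    simp only [Fin.tail, Fin.succ_zero_eq_one, Fin.succ_last]
    ring

lemma walkWeight_le_sub_of_le_sub {x : ι → ℝ} (h : ∀ i j, B i j ≤ x i - x j) (len : ℕ)
    (P : Fin (len + 1) → ι) : walkWeight B len P ≤ x (P 0) - x (P (Fin.last len)) :=
  walkWeight_sub x len P ▸ Finset.sum_le_sum fun _ _ => h _ _

def walkWeightsFrom (i : ι) : Set ℝ :=
  {w | ∃ len, ∃ P : Fin (len + 1) → ι, P 0 = i ∧ walkWeight B len P = w}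

-- junk value `0` when the weights are unbounded above
noncomputable def maxWalkWeight (i : ι) : ℝ :=
  sSup (walkWeightsFrom B i)

lemma zero_mem_walkWeightsFrom (i : ι) : 0 ∈ walkWeightsFrom B i :=
  ⟨0, fun _ => i, rfl, walkWeight_zero B _⟩

lemma maxWalkWeight_le {c : ℝ} (h : ∀ len P, walkWeight B len P ≤ c) (i : ι) :
    maxWalkWeight B i ≤ c :=
  csSup_le ⟨0, zero_mem_walkWeightsFrom B i⟩ fun _ ⟨len, P, _, hw⟩ => hw ▸ h len P

variable {B} (hB : ∀ i, BddAbove (walkWeightsFrom B i))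
include hB

lemma maxWalkWeight_nonneg (i : ι) : 0 ≤ maxWalkWeight B i :=
  le_csSup (hB i) (zero_mem_walkWeightsFrom B i)

lemma add_maxWalkWeight_le (i j : ι) : B i j + maxWalkWeight B j ≤ maxWalkWeight B i := by
  rw [← le_sub_iff_add_le']
  refine csSup_le ⟨0, zero_mem_walkWeightsFrom B j⟩ ?_
  rintro _ ⟨len, P, rfl, rfl⟩
  rw [le_sub_iff_add_le', ← walkWeight_cons]
  exact le_csSup (hB i) ⟨len + 1, Fin.cons i P, rfl, rfl⟩

-- A walk from `i` is either trivial or an edge `(i, j)` followed by a walk from `j`.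
lemma maxWalkWeight_eq_iSup [Finite ι] (i : ι) :
    maxWalkWeight B i = ⨆ j, max 0 (B i j + maxWalkWeight B j) := by
  have : Nonempty ι := ⟨i⟩
  have hbdd : BddAbove (Set.range fun j => max 0 (B i j + maxWalkWeight B j)) :=
    (Set.finite_range _).bddAbove
  apply le_antisymm
  · refine csSup_le ⟨0, zero_mem_walkWeightsFrom B i⟩ ?_
    rintro _ ⟨len, P, rfl, rfl⟩
    cases len with
    | zero => exact le_ciSup_of_le hbdd (P 0) (by simp)
    | succ len =>
      rw [walkWeight_succ]
      have hP : walkWeight B len (Fin.tail P) ≤ maxWalkWeight B (P 1) :=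
        le_csSup (hB _) ⟨len, Fin.tail P, rfl, rfl⟩
      exact le_ciSup_of_le hbdd (P 1) (le_max_of_le_right (by linarith))
  · exact ciSup_le fun j => max_le (maxWalkWeight_nonneg hB i) (add_maxWalkWeight_le hB i j)

end Walks

section Lukasiewicz

variable {ι κ : Type*} [Fintype κ]

lemma le_lukMulVec (A : ι → κ → ℝ) (x : κ → ℝ) (i : ι) (j : κ) :
    A i j + x j - 1 ≤ lukMulVec A x i :=
  le_ciSup_of_le (Set.finite_range _).bddAbove j (le_max_right _ _)

lemma lukSMul_of_le {lam : ℝ} {x : ι → ℝ} {i : ι} (h : 1 - lam ≤ x i) :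
    lukSMul lam x i = lam + x i - 1 :=
  max_eq_right (by linarith)

lemma sub_le_sub_of_lukMulVec_eq_lukSMul [Fintype ι] {A : ι → ι → ℝ} {x : ι → ℝ} {lam : ℝ}
    {i : ι} (hpure : 1 - lam ≤ x i) (heig : lukMulVec A x i = lukSMul lam x i) (j : ι) :
    A i j - lam ≤ x i - x j := by
  have := le_lukMulVec A x i j
  rw [heig, lukSMul_of_le hpure] at this
  linarith

end Lukasiewicz

theorem stmt9_general {n : ℕ} (A : Fin n → Fin n → ℝ)
    (lam : ℝ) (hlam1 : lam ≤ 1) :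
    (∃ x : Fin n → ℝ, (∀ i, x i ∈ Set.Icc (0 : ℝ) 1) ∧ (∀ i, 1 - lam ≤ x i) ∧
        ∀ i, lukMulVec A x i = lukSMul lam x i) ↔
      ∀ (len : ℕ) (P : Fin (len + 1) → Fin n),
        walkWeight (fun i j => A i j - lam) len P ≤ lam := by
  constructor
  · rintro ⟨x, hx, hpure, heig⟩ len P
    have := walkWeight_le_sub_of_le_sub (fun i j => A i j - lam)
      (fun i => sub_le_sub_of_lukMulVec_eq_lukSMul (hpure i) (heig i)) len P
    linarith [(hx (P 0)).2, hpure (P (Fin.last len))]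
  · intro hsec
    set B : Fin n → Fin n → ℝ := fun i j => A i j - lam
    have hbdd (i : Fin n) : BddAbove (walkWeightsFrom B i) :=
      ⟨lam, fun _ ⟨len, P, _, hw⟩ => hw ▸ hsec len P⟩
    have hm0 := maxWalkWeight_nonneg hbdd
    refine ⟨fun i => 1 - lam + maxWalkWeight B i, fun i => ⟨?_, ?_⟩, fun i => ?_, fun i => ?_⟩
    · linarith [hm0 i]
    · linarith [maxWalkWeight_le B hsec i]
    · linarith [hm0 i]
    · calc lukMulVec A _ i = ⨆ j, max 0 (B i j + maxWalkWeight B j) := by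
            refine congrArg iSup (funext fun j => congrArg (max 0) ?_)
            ring
        _ = lukSMul lam _ i := by
            rw [← maxWalkWeight_eq_iSup hbdd, lukSMul_of_le (by linarith [hm0 i])]
            ring

/-- for `λ ∈ (0,1]`, `A` has a pure Łukasiewicz eigenvector associated with `λ` iff
`D(A^{(λ)})` is `λ`-secure, i.e. every walk in `D(A^{(λ)})` has weight at most `λ`. -/
theorem stmt9 {n : ℕ} (hn : 0 < n) (A : Fin n → Fin n → ℝ)
    (hA : ∀ i j, A i j ∈ Set.Icc (0 : ℝ) 1) (lam : ℝ) (hlam0 : 0 < lam) (hlam1 : lam ≤ 1) :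
    (∃ x : Fin n → ℝ, (∀ i, x i ∈ Set.Icc (0 : ℝ) 1) ∧ (∀ i, 1 - lam ≤ x i) ∧
        ∀ i, lukMulVec A x i = lukSMul lam x i) ↔
      ∀ (len : ℕ) (P : Fin (len + 1) → Fin n),
        walkWeight (fun i j => A i j - lam) len P ≤ lam :=
  stmt9_general A lam hlam1
end
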